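/- If the monic type II polynomials satisfy x P_n = P_{n+1} + Σ_{j=0}^{r} a_{n,j} P_{n−j}, then the normalized type I vector polynomials satisfy the recurrence x A_n(x) = A_{n−1}(x) + Σ_{j=0}^{r} a_{n+j−1,j} A_{n+j}(x) for n ≥ 1, with A_0 ≡ 0. -/

import Mathlib

/-!
Pair a polynomial `Q` with a vector `B` by `⟨Q, B⟩ = ∑ₖ ∫ Q B_k dμ_k`. The type II and the
normalized type I polynomials are biorthogonal, `⟨P_m, A_{m'}⟩ = δ_{m+1,m'}`, so pairing the
difference `B` of the two sides of the claimed recurrence with `P_m` and using the type II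
recurrence gives `⟨P_m, B⟩ = 0` for every `m`, hence `⟨Q, B⟩ = 0` for every polynomial `Q`.
The components of `B` have degrees below `ν_{n+r} = ν_n + 1`, and normality of `ν_{n+r}` says
that the pairing between polynomials of degree `< n + r` and such vectors has no left kernel;
as `|ν_N| = N`, both spaces have dimension `n + r`, so it has no right kernel either and `B = 0`.
-/

open Polynomial

/-- The `j`-th entry of the proper multi-index `ν_n`. -/
def properIndex (r n : ℕ) (j : Fin r) : ℕ := (n + r - 1 - j.val) / r

/-- Type II orthogonality conditions (measures identified with moment functionals). -/
def TypeIISol (r : ℕ) (μ : Fin r → (Polynomial ℂ →ₗ[ℂ] ℂ)) (n : ℕ) (P : Polynomial ℂ) : Prop :=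
  P.degree ≤ (n : WithBot ℕ) ∧ ∀ j : Fin r, ∀ ℓ < properIndex r n j, μ j (X ^ ℓ * P) = 0

/-- The proper multi-index `ν_n` is normal. -/
def NormalIndex (r : ℕ) (μ : Fin r → (Polynomial ℂ →ₗ[ℂ] ℂ)) (n : ℕ) : Prop :=
  (∀ P, TypeIISol r μ n P → P = 0 ∨ P.natDegree = n) ∧
  (∀ P Q, TypeIISol r μ n P → TypeIISol r μ n Q → P ≠ 0 → ∃ c : ℂ, Q = c • P)

/-- Weakly complete system: all proper multi-indices are normal. -/
def WeaklyComplete (r : ℕ) (μ : Fin r → (Polynomial ℂ →ₗ[ℂ] ℂ)) : Prop :=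
  ∀ n, NormalIndex r μ n

/-- The type I multiple orthogonal vector polynomials `A_n = (A_{n,1},…,A_{n,r})`,
with the normalization `∫ x^{n-1} ∑_j A_{n,j}(x) dμ_j(x) = 1`. -/
def TypeINormalized (r : ℕ) (μ : Fin r → (Polynomial ℂ →ₗ[ℂ] ℂ))
    (A : ℕ → Fin r → Polynomial ℂ) : Prop :=
  ∀ n, 1 ≤ n →
    (∀ j : Fin r, (A n j).degree < (properIndex r n j : WithBot ℕ)) ∧
    (∀ ℓ : ℕ, ℓ + 2 ≤ n → ∑ j : Fin r, μ j (X ^ ℓ * A n j) = 0) ∧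
    (∑ j : Fin r, μ j (X ^ (n - 1) * A n j) = 1)

lemma Polynomial.X_pow_mem_degreeLT {R : Type*} [Semiring R] {i n : ℕ} (h : i < n) :
    (X ^ i : R[X]) ∈ degreeLT R n :=
  mem_degreeLT.mpr ((degree_X_pow_le i).trans_lt (by exact_mod_cast h))

lemma Polynomial.X_mul_mem_degreeLT {R : Type*} [Semiring R] {n : ℕ} {p : R[X]}
    (hp : p ∈ degreeLT R n) : X * p ∈ degreeLT R (n + 1) := by
  rw [mem_degreeLT] at hp ⊢
  calc (X * p).degree ≤ X.degree + p.degree := degree_mul_le _ _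
    _ ≤ 1 + p.degree := add_le_add_left degree_X_le _
    _ < 1 + n := WithBot.add_lt_add_left (by simp) hp
    _ = (n + 1 : ℕ) := by push_cast; ring

instance Polynomial.finiteDimensional_degreeLT {K : Type*} [Field K] (n : ℕ) :
    FiniteDimensional K (degreeLT K n) :=
  (degreeLTEquiv K n).symm.finiteDimensional

lemma Polynomial.finrank_degreeLT {K : Type*} [Field K] (n : ℕ) :
    Module.finrank K (degreeLT K n) = n := by
  rw [(degreeLTEquiv K n).finrank_eq, Module.finrank_fin_fun]

lemma LinearMap.map_eq_zero_of_mem_degreeLT {R M : Type*} [Semiring R] [AddCommMonoid M]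
    [Module R M] (f : R[X] →ₗ[R] M) {n : ℕ} (hf : ∀ i < n, f (X ^ i) = 0) {p : R[X]}
    (hp : p ∈ degreeLT R n) : f p = 0 := by
  classical
  rw [degreeLT_eq_span_X_pow] at hp
  refine (Submodule.span_le (p := LinearMap.ker f)).mpr ?_ hp
  simp only [Finset.coe_image, Finset.coe_range, Set.image_subset_iff]
  exact fun i hi => hf i hi

section MomentPairing

variable {R ι : Type*} [CommRing R] [Fintype ι]

noncomputable def momentPairing (μ : ι → (R[X] →ₗ[R] R)) :
    R[X] →ₗ[R] (ι → R[X]) →ₗ[R] R :=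
  LinearMap.mk₂ R (fun Q B => ∑ k, μ k (Q * B k))
    (fun _ _ _ => by simp only [add_mul, map_add, Finset.sum_add_distrib])
    (fun _ _ _ => by simp only [smul_mul_assoc, map_smul, smul_eq_mul, Finset.mul_sum])
    (fun _ _ _ => by simp only [Pi.add_apply, mul_add, map_add, Finset.sum_add_distrib])
    (fun _ _ _ => by
      simp only [Pi.smul_apply, mul_smul_comm, map_smul, smul_eq_mul, Finset.mul_sum])

variable (μ : ι → (R[X] →ₗ[R] R))

@[simp]
lemma momentPairing_apply (Q : R[X]) (B : ι → R[X]) :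
    momentPairing μ Q B = ∑ k, μ k (Q * B k) := rfl

lemma momentPairing_smul_right (p Q : R[X]) (B : ι → R[X]) :
    momentPairing μ Q (p • B) = momentPairing μ (p * Q) B := by
  simp only [momentPairing_apply, Pi.smul_apply, smul_eq_mul, mul_left_comm, mul_assoc]

lemma momentPairing_single [DecidableEq ι] (Q : R[X]) (k : ι) (p : R[X]) :
    momentPairing μ Q (Pi.single k p) = μ k (Q * p) := by
  rw [momentPairing_apply, Finset.sum_eq_single k (fun j _ hj => by simp [hj]) (by simp),
    Pi.single_eq_same]

variable {μ} in
lemma momentPairing_recurrence_eq_zero {P : ℕ → R[X]} {A : ℕ → ι → R[X]} {a : ℕ → ℕ → R}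
    {s : ℕ} (hrec : ∀ n, X * P n = P (n + 1) +
      ∑ j ∈ Finset.range (s + 1), a n j • (if j ≤ n then P (n - j) else 0))
    (hbiorth : ∀ m m', momentPairing μ (P m) (A m') = if m + 1 = m' then 1 else 0)
    {n : ℕ} (hn : 1 ≤ n) (m : ℕ) :
    momentPairing μ (P m) ((X : R[X]) • A n - A (n - 1) -
      ∑ j ∈ Finset.range (s + 1), a (n + j - 1) j • A (n + j)) = 0 := by
  have hlower : ∀ j, momentPairing μ (if j ≤ m then P (m - j) else 0) (A n) =
      if m + 1 = n + j then 1 else 0 := by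
    intro j
    split_ifs with hj hmj hmj
    · rw [hbiorth, if_pos (by omega)]
    · rw [hbiorth, if_neg (by omega)]
    · omega
    · rw [map_zero, LinearMap.zero_apply]
  -- `P_{m-j}` pairs with `A_n` only if `m = n + j - 1`, matching the coefficient of `A_{n+j}`
  have hupper : ∀ j, a (n + j - 1) j * (if m + 1 = n + j then 1 else 0) =
      a m j * (if m + 1 = n + j then 1 else 0) := by
    intro j
    split_ifs with hmj
    · rw [show n + j - 1 = m by omega]
    · rw [mul_zero, mul_zero]
  have hprev : momentPairing μ (P m) (A (n - 1)) = momentPairing μ (P (m + 1)) (A n) := by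
    rw [hbiorth, hbiorth]
    congr 1
    simp only [eq_iff_iff]
    omega
  rw [map_sub, map_sub, momentPairing_smul_right, hrec, map_add, LinearMap.add_apply, map_sum,
    map_sum, LinearMap.sum_apply, hprev]
  simp only [map_smul, LinearMap.smul_apply, smul_eq_mul, hlower, hbiorth, hupper]
  ring

end MomentPairing

section ProperIndex

variable {r : ℕ}

lemma properIndex_mono {m n : ℕ} (h : m ≤ n) (j : Fin r) :
    properIndex r m j ≤ properIndex r n j :=
  Nat.div_le_div_right (by omega)

lemma properIndex_add_self (n : ℕ) (j : Fin r) :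
    properIndex r (n + r) j = properIndex r n j + 1 := by
  unfold properIndex
  rw [show n + r + r - 1 - j = n + r - 1 - j + r by omega, Nat.add_div_right _ j.pos]

lemma properIndex_of_lt {n : ℕ} (hn : n < r) (j : Fin r) :
    properIndex r n j = if (j : ℕ) < n then 1 else 0 := by
  unfold properIndex
  split_ifs with hj
  · rw [show n + r - 1 - j = n - 1 - j + r by omega, Nat.add_div_right _ (by omega),
      Nat.div_eq_of_lt (by omega)]
  · exact Nat.div_eq_of_lt (by omega)

lemma sum_properIndex (hr : 0 < r) (n : ℕ) : ∑ j : Fin r, properIndex r n j = n := by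
  induction n using Nat.strong_induction_on with
  | _ n ih =>
    rcases lt_or_ge n r with hn | hn
    · simp only [properIndex_of_lt hn, Finset.sum_boole, Nat.cast_id, Fin.card_filter_val_lt]
      omega
    · obtain ⟨m, rfl⟩ := Nat.exists_eq_add_of_le' hn
      simp only [properIndex_add_self, Finset.sum_add_distrib, ih m (by omega),
        Finset.sum_const, Finset.card_univ, Fintype.card_fin, smul_eq_mul, mul_one]

end ProperIndex

namespace NormalIndex

variable {r N : ℕ} {μ : Fin r → (ℂ[X] →ₗ[ℂ] ℂ)}

lemma eq_zero_of_typeIISol (hN : NormalIndex r μ N) {Q : ℂ[X]} (hQ : TypeIISol r μ N Q)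
    (hdeg : Q ∈ degreeLT ℂ N) : Q = 0 := by
  by_contra hQ0
  have hQN := (hN.1 Q hQ).resolve_left hQ0
  rw [mem_degreeLT, degree_eq_natDegree hQ0, hQN] at hdeg
  exact lt_irrefl _ hdeg

theorem eq_zero_of_momentPairing_eq_zero (hN : NormalIndex r μ N) (hr : 0 < r)
    {B : Fin r → ℂ[X]} (hB : ∀ k, B k ∈ degreeLT ℂ (properIndex r N k))
    (h : ∀ Q ∈ degreeLT ℂ N, momentPairing μ Q B = 0) : B = 0 := by
  classical
  let V := ∀ k, degreeLT ℂ (properIndex r N k)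
  let incl : V →ₗ[ℂ] Fin r → ℂ[X] :=
    { toFun := fun v k => v k, map_add' := fun _ _ => rfl, map_smul' := fun _ _ => rfl }
  let p := (momentPairing μ).compl₁₂ (degreeLT ℂ N).subtype incl
  have hleft : Function.Injective p := by
    refine (injective_iff_map_eq_zero p).mpr fun Q hQ => Subtype.ext ?_
    refine hN.eq_zero_of_typeIISol ⟨(mem_degreeLT.mp Q.2).le, fun k ℓ hℓ => ?_⟩ Q.2
    have := LinearMap.congr_fun hQ (Pi.single k ⟨X ^ ℓ, X_pow_mem_degreeLT hℓ⟩)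
    have hincl :
        incl (Pi.single k ⟨X ^ ℓ, X_pow_mem_degreeLT hℓ⟩) = Pi.single k (X ^ ℓ) := by
      funext j
      rcases eq_or_ne j k with rfl | hj
      · simp [incl]
      · simp [incl, hj]
    rwa [LinearMap.compl₁₂_apply, hincl, momentPairing_single, mul_comm] at this
  have hdim : Module.finrank ℂ (degreeLT ℂ N) = Module.finrank ℂ V := by
    simp only [V, Module.finrank_pi_fintype, finrank_degreeLT, sum_properIndex hr]
  have hsurj : Function.Surjective p :=
    (LinearMap.injective_iff_surjective_of_finrank_eq_finrank
      (by rw [Subspace.dual_finrank_eq, hdim])).mp hleft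
  have hright : Function.Injective p.flip := LinearMap.flip_injective_iff₂.mpr hsurj
  have hB0 : (fun k => ⟨B k, hB k⟩ : V) = 0 := by
    refine hright (LinearMap.ext fun Q => ?_)
    rw [map_zero, LinearMap.zero_apply]
    exact h Q Q.2
  funext k
  exact congrArg Subtype.val (congrFun hB0 k)

end NormalIndex

section Biorthogonality

variable {r : ℕ} {μ : Fin r → (ℂ[X] →ₗ[ℂ] ℂ)}

lemma TypeIISol.momentPairing_eq_zero {n : ℕ} {P : ℂ[X]} (hP : TypeIISol r μ n P)
    {B : Fin r → ℂ[X]} (hB : ∀ k, B k ∈ degreeLT ℂ (properIndex r n k)) :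
    momentPairing μ P B = 0 := by
  rw [momentPairing_apply]
  refine Finset.sum_eq_zero fun k _ => ?_
  exact ((μ k).comp (LinearMap.mulLeft ℂ P)).map_eq_zero_of_mem_degreeLT
    (fun ℓ hℓ => by simpa [mul_comm] using hP.2 k ℓ hℓ) (hB k)

namespace TypeINormalized

variable {A : ℕ → Fin r → ℂ[X]} (hA : TypeINormalized r μ A)
include hA

lemma mem_degreeLT (hA0 : ∀ k, A 0 k = 0) (m : ℕ) (k : Fin r) :
    A m k ∈ degreeLT ℂ (properIndex r m k) := by
  rcases Nat.eq_zero_or_pos m with rfl | hm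
  · simp [hA0]
  · exact Polynomial.mem_degreeLT.mpr ((hA m hm).1 k)

lemma momentPairing_eq_zero {m : ℕ} (hm : 1 ≤ m) {Q : ℂ[X]}
    (hQ : Q ∈ degreeLT ℂ (m - 1)) : momentPairing μ Q (A m) = 0 :=
  ((momentPairing μ).flip (A m)).map_eq_zero_of_mem_degreeLT
    (fun ℓ hℓ => (hA m hm).2.1 ℓ (by omega)) hQ

lemma momentPairing_of_monic {m : ℕ} (hm : 1 ≤ m) {Q : ℂ[X]} (hQ : Q.Monic)
    (hQm : Q.natDegree = m - 1) : momentPairing μ Q (A m) = 1 := by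
  have hQdeg : Q.degree = (m - 1 : ℕ) := by rw [degree_eq_natDegree hQ.ne_zero, hQm]
  have hlow : Q - X ^ (m - 1) ∈ degreeLT ℂ (m - 1) := by
    rw [Polynomial.mem_degreeLT, ← hQdeg]
    exact degree_sub_lt_left (by rw [hQdeg, degree_X_pow]) hQ.ne_zero
      (by rw [hQ.leadingCoeff, leadingCoeff_X_pow])
  calc momentPairing μ Q (A m)
      = momentPairing μ (X ^ (m - 1)) (A m) + momentPairing μ (Q - X ^ (m - 1)) (A m) := by
        rw [← LinearMap.add_apply, ← map_add, add_sub_cancel]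
    _ = 1 := by rw [hA.momentPairing_eq_zero hm hlow, add_zero]; exact (hA m hm).2.2

theorem momentPairing_typeII_eq (hA0 : ∀ k, A 0 k = 0) {P : ℕ → ℂ[X]}
    (hmonic : ∀ n, (P n).Monic) (hdeg : ∀ n, (P n).natDegree = n)
    (horth : ∀ n, TypeIISol r μ n (P n)) (m m' : ℕ) :
    momentPairing μ (P m) (A m') = if m + 1 = m' then 1 else 0 := by
  split_ifs with hmm'
  · exact hA.momentPairing_of_monic (by omega) (hmonic m) (by rw [hdeg]; omega)
  rcases le_or_gt m' m with hle | hgt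
  · exact (horth m).momentPairing_eq_zero fun k =>
      degreeLT_mono (properIndex_mono hle k) (hA.mem_degreeLT hA0 m' k)
  · refine hA.momentPairing_eq_zero (by omega) (Polynomial.mem_degreeLT.mpr ?_)
    have hlt : m < m' - 1 := by omega
    rw [degree_eq_natDegree (hmonic m).ne_zero, hdeg]
    exact_mod_cast hlt

lemma recurrence_mem_degreeLT (hA0 : ∀ k, A 0 k = 0) {n : ℕ} (hn : 1 ≤ n) (a : ℕ → ℕ → ℂ)
    (k : Fin r) :
    ((X : ℂ[X]) • A n - A (n - 1) -
        ∑ j ∈ Finset.range (r + 1), a (n + j - 1) j • A (n + j)) k ∈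
      degreeLT ℂ (properIndex r (n + r) k) := by
  have hmem := hA.mem_degreeLT hA0
  have hle : ∀ m ≤ n + r, A m k ∈ degreeLT ℂ (properIndex r (n + r) k) :=
    fun m hm => degreeLT_mono (properIndex_mono hm k) (hmem m k)
  simp only [Pi.sub_apply, Finset.sum_apply, Pi.smul_apply, smul_eq_mul]
  refine sub_mem (sub_mem ?_ (hle _ (by omega)))
    (sum_mem fun j hj => Submodule.smul_mem _ _ ?_)
  · rw [properIndex_add_self]
    exact X_mul_mem_degreeLT (hmem n k)
  · exact hle _ (by simp only [Finset.mem_range] at hj; omega)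

end TypeINormalized

end Biorthogonality

theorem typeI_recurrence_general (r : ℕ)
    (μ : Fin r → (Polynomial ℂ →ₗ[ℂ] ℂ)) (hwc : WeaklyComplete r μ)
    (P : ℕ → Polynomial ℂ)
    (hmonic : ∀ n, (P n).Monic) (hdeg : ∀ n, (P n).natDegree = n)
    (horth : ∀ n, TypeIISol r μ n (P n))
    (A : ℕ → Fin r → Polynomial ℂ) (hA : TypeINormalized r μ A)
    (hA0 : ∀ k : Fin r, A 0 k = 0)
    (a : ℕ → ℕ → ℂ)
    (hrec : ∀ n, X * P n = P (n + 1) +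
      ∑ j ∈ Finset.range (r + 1), a n j • (if j ≤ n then P (n - j) else 0)) :
    ∀ n, 1 ≤ n → ∀ k : Fin r,
      X * A n k = A (n - 1) k +
        ∑ j ∈ Finset.range (r + 1), a (n + j - 1) j • A (n + j) k := by
  intro n hn k
  set B : Fin r → ℂ[X] := (X : ℂ[X]) • A n - A (n - 1) -
    ∑ j ∈ Finset.range (r + 1), a (n + j - 1) j • A (n + j) with hB
  have hPB : ∀ m, momentPairing μ (P m) B = 0 :=
    momentPairing_recurrence_eq_zero hrec (hA.momentPairing_typeII_eq hA0 hmonic hdeg horth) hn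
  let S : Polynomial.Sequence ℂ :=
    ⟨P, fun m => by rw [degree_eq_natDegree (hmonic m).ne_zero, hdeg]⟩
  have hQB : (momentPairing μ).flip B = 0 :=
    LinearMap.ext_on_range (S.span fun m => (hmonic m).leadingCoeff ▸ isUnit_one) hPB
  have hB0 : B = 0 := (hwc (n + r)).eq_zero_of_momentPairing_eq_zero k.pos
    (hA.recurrence_mem_degreeLT hA0 hn a) fun Q _ => LinearMap.congr_fun hQB Q
  have hBk := congrFun hB0 k
  simp only [hB, Pi.sub_apply, Finset.sum_apply, Pi.smul_apply, smul_eq_mul, Pi.zero_apply]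
    at hBk
  linear_combination hBk

/-- if the monic type II polynomials satisfy the order `r+1` recurrence with
coefficients `a_{n,j}`, then the normalized type I vector polynomials satisfy (componentwise)
`x A_n = A_{n-1} + ∑_{j=0}^{r} a_{n+j-1,j} A_{n+j}` for `n ≥ 1`, with `A_0 ≡ 0`. -/
theorem typeI_recurrence (r : ℕ) (hr : 0 < r)
    (μ : Fin r → (Polynomial ℂ →ₗ[ℂ] ℂ)) (hwc : WeaklyComplete r μ)
    (P : ℕ → Polynomial ℂ)
    (hmonic : ∀ n, (P n).Monic) (hdeg : ∀ n, (P n).natDegree = n)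
    (horth : ∀ n, TypeIISol r μ n (P n))
    (A : ℕ → Fin r → Polynomial ℂ) (hA : TypeINormalized r μ A)
    (hA0 : ∀ k : Fin r, A 0 k = 0)
    (a : ℕ → ℕ → ℂ)
    (hrec : ∀ n, X * P n = P (n + 1) +
      ∑ j ∈ Finset.range (r + 1), a n j • (if j ≤ n then P (n - j) else 0)) :
    ∀ n, 1 ≤ n → ∀ k : Fin r,
      X * A n k = A (n - 1) k +
        ∑ j ∈ Finset.range (r + 1), a (n + j - 1) j • A (n + j) k :=
  typeI_recurrence_general r μ hwc P hmonic hdeg horth A hA hA0 a hrec
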